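/- Let w_1, …, w_5 be positive rational numbers and d_1, d_2 positive rational numbers. If A(d_1) is nonempty and there exists i ∈ {1,…,5} with w_i ≤ d_2, then ℓ(d_1 + d_2) ≥ ℓ(d_1) + ℓ(d_2) + 1. (This is the key intermediate inequality in the proof of Lemma 5.2: choosing a maximal element a_max of A(d_1), the translated set a_max + A(d_2) and the extra point a_max + e_i lie in A(d_1+d_2) but outside A(d_1), and are disjoint from each other.) -/

import Mathlib

/-- `A(N)`: integer points with all coordinates at least 1 and weighted sum at most `N`. -/
def Aset (w : Fin 5 → ℚ) (N : ℚ) : Set (Fin 5 → ℤ) :=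
  {a | (∀ i, 1 ≤ a i) ∧ ∑ i, (a i : ℚ) * w i ≤ N}

/-- `ℓ(N)`: the number of points of `A(N)`. -/
noncomputable def ellA (w : Fin 5 → ℚ) (N : ℚ) : ℕ := (Aset w N).ncard

/-!
Pick `m ∈ A(d₁)` of maximal weight `∑ mᵢ wᵢ`. Translating by `m` adds the weight of the
translation vector, so `m + A(d₂)` and `m + eᵢ` (with `wᵢ ≤ d₂`) lie in `A(d₁ + d₂)`,
and by maximality of `m` none of them lies in `A(d₁)`. Since `eᵢ` has a zero coordinate,
`eᵢ ∉ A(d₂)`, so these are `ℓ(d₂) + 1` distinct new points.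
-/

def weightedSum {ι : Type*} [Fintype ι] (w : ι → ℚ) (a : ι → ℤ) : ℚ :=
  ∑ i, (a i : ℚ) * w i

section WeightedSum

variable {ι : Type*} [Fintype ι] (w : ι → ℚ)

theorem weightedSum_add (a b : ι → ℤ) :
    weightedSum w (a + b) = weightedSum w a + weightedSum w b := by
  simp only [weightedSum, Pi.add_apply, Int.cast_add, add_mul, Finset.sum_add_distrib]

theorem weightedSum_single [DecidableEq ι] (i : ι) : weightedSum w (Pi.single i 1) = w i := by
  simp [weightedSum, Pi.single_apply]

variable {w}

theorem mul_le_weightedSum (hw : ∀ i, 0 ≤ w i) {a : ι → ℤ} (ha : 0 ≤ a) (i : ι) :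
    (a i : ℚ) * w i ≤ weightedSum w a :=
  Finset.single_le_sum (f := fun j => (a j : ℚ) * w j)
    (fun j _ => mul_nonneg (by exact_mod_cast ha j) (hw j)) (Finset.mem_univ i)

theorem weightedSum_pos [Nonempty ι] (hw : ∀ i, 0 < w i) {a : ι → ℤ} (ha : ∀ i, 0 < a i) :
    0 < weightedSum w a :=
  Finset.sum_pos (fun j _ => mul_pos (by exact_mod_cast ha j) (hw j)) Finset.univ_nonempty

end WeightedSum

section Aset

variable {w : Fin 5 → ℚ}

theorem mem_Aset_iff {N : ℚ} {a : Fin 5 → ℤ} :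
    a ∈ Aset w N ↔ 1 ≤ a ∧ weightedSum w a ≤ N :=
  Iff.rfl

theorem Aset_finite (hw : ∀ i, 0 < w i) (N : ℚ) : (Aset w N).Finite := by
  refine (Set.finite_Icc 1 fun i => ⌈N / w i⌉).subset fun a ha => ?_
  rw [mem_Aset_iff] at ha
  refine ⟨ha.1, fun i => Int.le_ceil_iff.mpr ?_⟩
  have hle := (mul_le_weightedSum (fun j => (hw j).le) (zero_le_one.trans ha.1) i).trans ha.2
  linarith [(le_div_iff₀ (hw i)).mpr hle]

theorem Aset_mono {d d' : ℚ} (h : d ≤ d') : Aset w d ⊆ Aset w d' :=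
  fun _ ha => ⟨ha.1, ha.2.trans h⟩

theorem add_mem_Aset_add {d₁ d₂ : ℚ} {a b : Fin 5 → ℤ} (ha : a ∈ Aset w d₁)
    (hb : 0 ≤ b) (hbw : weightedSum w b ≤ d₂) : a + b ∈ Aset w (d₁ + d₂) := by
  rw [mem_Aset_iff] at ha ⊢
  refine ⟨le_add_of_le_of_nonneg ha.1 hb, ?_⟩
  rw [weightedSum_add]
  exact add_le_add ha.2 hbw

theorem add_notMem_Aset_of_forall_le {d : ℚ} {m b : Fin 5 → ℤ}
    (hm : ∀ a ∈ Aset w d, weightedSum w a ≤ weightedSum w m) (hb : 0 < weightedSum w b) :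
    m + b ∉ Aset w d := fun hmb => by
  have := hm _ hmb
  rw [weightedSum_add] at this
  linarith

theorem single_notMem_Aset (N : ℚ) (i : Fin 5) : Pi.single i 1 ∉ Aset w N := fun h => by
  obtain ⟨j, hj⟩ := exists_ne i
  have := h.1 j
  simp [Pi.single_eq_of_ne hj] at this

end Aset

theorem ell_add_strict_superadditive_general (w : Fin 5 → ℚ) (d₁ d₂ : ℚ)
    (hw : ∀ i, 0 < w i)
    (hne : (Aset w d₁).Nonempty) (h₂ : ∃ i, w i ≤ d₂) :
    ellA w d₁ + ellA w d₂ + 1 ≤ ellA w (d₁ + d₂) := by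
  obtain ⟨i, hi⟩ := h₂
  obtain ⟨m, hm, hmax⟩ := Set.exists_max_image _ (weightedSum w) (Aset_finite hw d₁) hne
  set B := insert (Pi.single i 1) (Aset w d₂)
  have hB_pos : ∀ b ∈ B, 0 < weightedSum w b := by
    rintro b (rfl | hb)
    · rw [weightedSum_single]; exact hw i
    · exact weightedSum_pos hw fun j => zero_lt_one.trans_le (hb.1 j)
  have hB_sub : (m + ·) '' B ⊆ Aset w (d₁ + d₂) := by
    rintro _ ⟨b, rfl | hb, rfl⟩
    · exact add_mem_Aset_add hm (Pi.single_nonneg.mpr zero_le_one)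
        ((weightedSum_single w i).le.trans hi)
    · exact add_mem_Aset_add hm (zero_le_one.trans hb.1) hb.2
  have hdisj : Disjoint (Aset w d₁) ((m + ·) '' B) :=
    Set.disjoint_right.mpr fun _ ⟨b, hb, hmb⟩ =>
      hmb ▸ add_notMem_Aset_of_forall_le hmax (hB_pos b hb)
  calc ellA w d₁ + ellA w d₂ + 1 = (Aset w d₁ ∪ (m + ·) '' B).ncard := by
        rw [Set.ncard_union_eq hdisj (Aset_finite hw d₁)
            (((Aset_finite hw d₂).insert _).image _),
          Set.ncard_image_of_injective _ (add_right_injective m),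
          Set.ncard_insert_of_notMem (single_notMem_Aset d₂ i) (Aset_finite hw d₂)]
        rfl
    _ ≤ ellA w (d₁ + d₂) :=
        Set.ncard_le_ncard (Set.union_subset (Aset_mono (by linarith [hw i])) hB_sub)
          (Aset_finite hw _)

/-- if `A(d₁)` is nonempty and some `w i ≤ d₂`, then
`ℓ(d₁+d₂) ≥ ℓ(d₁) + ℓ(d₂) + 1`. -/
theorem ell_add_strict_superadditive (w : Fin 5 → ℚ) (d₁ d₂ : ℚ)
    (hw : ∀ i, 0 < w i) (hd₁ : 0 < d₁) (hd₂ : 0 < d₂)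
    (hne : (Aset w d₁).Nonempty) (h₂ : ∃ i, w i ≤ d₂) :
    ellA w d₁ + ellA w d₂ + 1 ≤ ellA w (d₁ + d₂) :=
  ell_add_strict_superadditive_general w d₁ d₂ hw hne h₂
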